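/- In blind deconvolution with subspace constraints: for all n, m₁, m₂ with n ≥ m₁m₂, for almost all D ∈ ℂ^{n×m₁} and E ∈ ℂ^{n×m₂}, every pair (x₀,y₀) ∈ ℂ^{m₁} × ℂ^{m₂} with x₀ ≠ 0 and y₀ ≠ 0 is identifiable up to scaling from z = (Dx₀) ⊛ (Ey₀); i.e., any (x,y) with (Dx) ⊛ (Ey) = (Dx₀) ⊛ (Ey₀) satisfies x = σx₀, y = σ^{-1}y₀ for some nonzero σ ∈ ℂ. -/

import Mathlib

/-!
Let `G_{DE}` be the `n × m₁m₂` matrix whose column `(j, k)` is `D_j ⊛ E_k`. Bilinearity of `⊛`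
gives `(Dx) ⊛ (Ey) = G_{DE} (x ⊗ y)`, so when `G_{DE}` is injective equal measurements force
`x ⊗ y = x₀ ⊗ y₀`, and a nonzero rank-one tensor determines its factors up to reciprocal scalars.

Fix rows `j + m₁k` of `G_{DE}`. The resulting `m₁m₂ × m₁m₂` minor is a polynomial in the entries
of `(D, E)`, and it is not the zero polynomial: if the columns of `D` and `E` are the unit vectors
`e_j` and `e_{m₁k}`, then `D_j ⊛ E_k = e_{j + m₁k}` and the minor is the identity. The zero set of
a nonzero polynomial is Lebesgue-null (induction on the number of variables: Fubini, with the
leading coefficient nonzero almost everywhere and finitely many roots in the last variable),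
so `G_{DE}` is injective for almost all `(D, E)`.
-/

open MeasureTheory

/-- Circular convolution of two vectors in `ℂ^n`. -/
noncomputable def cconv {n : ℕ} (u v : Fin n → ℂ) : Fin n → ℂ :=
  fun i => ∑ j, u j * v (i - j)

/-- Matrix-vector multiplication. -/
noncomputable def mulVecF {n m : ℕ} (A : Fin n → Fin m → ℂ) (x : Fin m → ℂ) : Fin n → ℂ :=
  fun i => ∑ j, A i j * x j

theorem MvPolynomial.ae_eval_ne_zero {ι : Type*} [Fintype ι] {p : MvPolynomial ι ℂ}
    (hp : p ≠ 0) : ∀ᵐ x : ι → ℂ, eval x p ≠ 0 := by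
  refine Fintype.induction_empty_option
    (P := fun ι _ => ∀ p : MvPolynomial ι ℂ, p ≠ 0 → ∀ᵐ x : ι → ℂ, eval x p ≠ 0)
    ?of_equiv ?empty ?option ι p hp
  case of_equiv =>
    intro α β _ e ih p hp
    let := Fintype.ofEquiv β e.symm
    have hq : rename e.symm p ≠ 0 :=
      (rename_injective _ e.symm.injective).ne_iff' (map_zero _) |>.mpr hp
    filter_upwards [(volume_measurePreserving_piCongrLeft (fun _ => ℂ) e).symm
      |>.quasiMeasurePreserving.ae (ih _ hq)] with y hy
    rwa [eval_rename, show _ ∘ e.symm = y by funext b; exact congrArg y (e.apply_symm_apply b)]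
      at hy
  case empty =>
    intro p hp
    obtain ⟨a, rfl⟩ := C_surjective PEmpty p
    exact .of_forall fun x => by simpa using hp
  case option =>
    intro α _ ih p hp
    set q := optionEquivLeft ℂ α p
    have hq : q ≠ 0 := (optionEquivLeft ℂ α).injective.ne_iff' (map_zero _) |>.mpr hp
    let e := MeasurableEquiv.piOptionEquivProd fun _ : Option α => ℂ
    have he : MeasurePreserving e volume volume :=
      (MeasurePreserving.mk e.symm.measurable (Measure.pi_map_piOptionEquivProd _)).symm
    refine he.quasiMeasurePreserving.ae (p := fun z => eval (e.symm z) p ≠ 0) ?_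
      |>.mono fun x hx => by simpa using hx
    rw [Measure.volume_eq_prod, Measure.ae_prod_iff_ae_ae]
    · filter_upwards [ih _ (Polynomial.leadingCoeff_ne_zero.mpr hq)] with s hs
      have hmap : q.map (eval s) ≠ 0 := fun h =>
        hs (by simpa using congrArg (Polynomial.coeff · q.natDegree) h)
      filter_upwards [(Polynomial.finite_setOfPred_isRoot hmap).countable.ae_notMem volume]
        with y hy
      have hsy : e.symm (s, y) = fun o => o.elim y s := by ext (_ | _) <;> rfl
      rwa [hsy, optionEquivLeft_elim_eval]
    · exact (measurableSet_singleton 0).compl.preimage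
        ((continuous_eval p).measurable.comp e.symm.measurable)

theorem Filter.Eventually.comp_continuousLinearEquiv {E F : Type*}
    [NormedAddCommGroup E] [NormedSpace ℝ E] [MeasurableSpace E] [BorelSpace E]
    [FiniteDimensional ℝ E]
    [NormedAddCommGroup F] [NormedSpace ℝ F] [MeasurableSpace F] [BorelSpace F]
    [FiniteDimensional ℝ F]
    {μ : Measure E} [μ.IsAddHaarMeasure] {ν : Measure F} [ν.IsAddHaarMeasure]
    {p : F → Prop} (hp : ∀ᵐ y ∂ν, p y) (e : E ≃L[ℝ] F) : ∀ᵐ x ∂μ, p (e x) :=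
  ae_of_ae_map e.continuous.aemeasurable
    (Measure.absolutelyContinuous_isAddHaarMeasure _ ν |>.ae_le hp)

theorem Matrix.mulVec_injective_of_det_submatrix_ne_zero {m k K : Type*} [Fintype k]
    [DecidableEq k] [CommRing K] [IsDomain K] {A : Matrix m k K} {f : k → m}
    (h : (A.submatrix f id).det ≠ 0) : Function.Injective A.mulVec := fun _ _ hvw =>
  mulVec_injective_of_det_ne_zero h <| funext fun i => congrFun hvw (f i)

theorem Fin.exists_injective_add {n m₁ m₂ : ℕ} [NeZero n] (h : m₁ * m₂ ≤ n) :
    ∃ (a : Fin m₁ → Fin n) (b : Fin m₂ → Fin n),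
      Function.Injective fun p : Fin m₁ × Fin m₂ => a p.1 + b p.2 := by
  have h' : m₂ * m₁ ≤ n := by rwa [mul_comm]
  refine ⟨fun j => Fin.ofNat n j, fun k => Fin.ofNat n (m₁ * k), ?_⟩
  have hf : ∀ p : Fin m₁ × Fin m₂, Fin.ofNat n p.1 + Fin.ofNat n (m₁ * p.2) =
      Fin.castLE h' (finProdFinEquiv p.swap) := fun p => Fin.ext <| by
    simpa [finProdFinEquiv, Fin.val_add] using
      Nat.mod_eq_of_lt ((finProdFinEquiv p.swap).isLt.trans_le h')
  simp only [hf]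
  exact (Fin.castLE_injective _).comp (finProdFinEquiv.injective.comp Prod.swap_injective)

section convMatrix

open Matrix

variable {R : Type*} {n m₁ m₂ : ℕ}

/-- The paper's `G_{DE}`: column `(j, k)` is `D^{(:,j)} ⊛ E^{(:,k)}`. -/
def convMatrix [Semiring R] (D : Fin n → Fin m₁ → R) (E : Fin n → Fin m₂ → R) :
    Matrix (Fin n) (Fin m₁ × Fin m₂) R :=
  of fun i p => ∑ l, D l p.1 * E (i - l) p.2

theorem RingHom.map_convMatrix {S : Type*} [Semiring R] [Semiring S] (φ : R →+* S)
    (D : Fin n → Fin m₁ → R) (E : Fin n → Fin m₂ → R) :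
    (convMatrix D E).map φ = convMatrix (fun l j => φ (D l j)) (fun l k => φ (E l k)) := by
  ext i p
  simp [convMatrix]

theorem cconv_mulVecF (D : Fin n → Fin m₁ → ℂ) (E : Fin n → Fin m₂ → ℂ) (x : Fin m₁ → ℂ)
    (y : Fin m₂ → ℂ) :
    cconv (mulVecF D x) (mulVecF E y) = convMatrix D E *ᵥ fun p => x p.1 * y p.2 := by
  funext i
  simp only [mulVec, dotProduct, convMatrix, of_apply, Finset.sum_mul]
  rw [Finset.sum_comm]
  simp only [cconv, mulVecF, Fintype.sum_prod_type, Fintype.sum_mul_sum]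
  exact Finset.sum_congr rfl fun l _ => Finset.sum_congr rfl fun j _ =>
    Finset.sum_congr rfl fun k _ => by ring

theorem convMatrix_single [NeZero n] [Semiring R] (a : Fin m₁ → Fin n) (b : Fin m₂ → Fin n) :
    convMatrix (fun l j => Pi.single (a j) (1 : R) l) (fun l k => Pi.single (b k) 1 l) =
      of fun i p => Pi.single (a p.1 + b p.2) 1 i := by
  ext i p
  simp only [convMatrix, of_apply, Pi.single_apply, boole_mul, Finset.sum_ite_eq',
    Finset.mem_univ, if_true, sub_eq_iff_eq_add']

theorem exists_det_submatrix_convMatrix_ne_zero (R : Type*) [CommRing R] [Nontrivial R]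
    (h : m₁ * m₂ ≤ n) :
    ∃ (f : Fin m₁ × Fin m₂ → Fin n) (D : Fin n → Fin m₁ → R) (E : Fin n → Fin m₂ → R),
      ((convMatrix D E).submatrix f id).det ≠ 0 := by
  obtain rfl | hn := n.eq_zero_or_pos
  · have : IsEmpty (Fin m₁ × Fin m₂) := Fintype.card_eq_zero_iff.mp (by simpa using h)
    exact ⟨isEmptyElim, 0, 0, by simp⟩
  have := NeZero.of_pos hn
  obtain ⟨a, b, hab⟩ := Fin.exists_injective_add h
  refine ⟨fun p => a p.1 + b p.2, fun l j => (Pi.single (a j) 1 : Fin n → R) l,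
    fun l k => (Pi.single (b k) 1 : Fin n → R) l, ?_⟩
  have hid : (of fun i (p : Fin m₁ × Fin m₂) => (Pi.single (a p.1 + b p.2) 1 : Fin n → R) i
      ).submatrix (fun p : Fin m₁ × Fin m₂ => a p.1 + b p.2) id = 1 := by
    ext r c
    simp [Pi.single_apply, hab.eq_iff, one_apply]
  rw [convMatrix_single a b, hid, det_one]
  exact one_ne_zero

theorem ae_injective_mulVec_convMatrix (h : m₁ * m₂ ≤ n) :
    ∀ᵐ DE : (Fin n → Fin m₁ → ℂ) × (Fin n → Fin m₂ → ℂ),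
      Function.Injective (convMatrix DE.1 DE.2).mulVec := by
  obtain ⟨f, D₀, E₀, h₀⟩ := exists_det_submatrix_convMatrix_ne_zero ℂ h
  let ι := (Σ _ : Fin n, Fin m₁) ⊕ (Σ _ : Fin n, Fin m₂)
  let e : ((Fin n → Fin m₁ → ℂ) × (Fin n → Fin m₂ → ℂ)) ≃L[ℝ] (ι → ℂ) :=
    ((LinearEquiv.piCurry ℝ fun _ _ => ℂ).prodCongr (LinearEquiv.piCurry ℝ fun _ _ => ℂ)).symm
      ≪≫ₗ (LinearEquiv.sumArrowLequivProdArrow _ _ ℝ ℂ).symm |>.toContinuousLinearEquiv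
  let P : MvPolynomial ι ℂ := ((convMatrix (fun l j => MvPolynomial.X (.inl ⟨l, j⟩))
    (fun l k => MvPolynomial.X (.inr ⟨l, k⟩))).submatrix f id).det
  have hP : ∀ DE, MvPolynomial.eval (e DE) P = ((convMatrix DE.1 DE.2).submatrix f id).det := by
    intro DE
    rw [RingHom.map_det, RingHom.mapMatrix_apply, ← submatrix_map, RingHom.map_convMatrix]
    simp only [MvPolynomial.eval_X]
    rfl
  have hP₀ : P ≠ 0 := fun hP₀ => h₀ (by simpa [hP₀] using (hP (D₀, E₀)).symm)
  have : (volume : Measure (Fin n → Fin m₁ → ℂ)).IsAddHaarMeasure :=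
    Measure.pi.isAddHaarMeasure _
  have : (volume : Measure (Fin n → Fin m₂ → ℂ)).IsAddHaarMeasure :=
    Measure.pi.isAddHaarMeasure _
  have : (volume : Measure ((Fin n → Fin m₁ → ℂ) × (Fin n → Fin m₂ → ℂ))).IsAddHaarMeasure :=
    Measure.prod.instIsAddHaarMeasure _ _
  filter_upwards [(MvPolynomial.ae_eval_ne_zero hP₀).comp_continuousLinearEquiv e] with DE hDE
  exact mulVec_injective_of_det_submatrix_ne_zero (hP DE ▸ hDE)

end convMatrix

theorem exists_smul_eq_of_mul_eq_mul {K α β : Type*} [Field K] {x x₀ : α → K}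
    {y y₀ : β → K} (hx₀ : x₀ ≠ 0) (hy₀ : y₀ ≠ 0) (h : ∀ j k, x j * y k = x₀ j * y₀ k) :
    ∃ σ : K, σ ≠ 0 ∧ x = σ • x₀ ∧ y = σ⁻¹ • y₀ := by
  obtain ⟨j₀, hj₀⟩ : ∃ j, x₀ j ≠ 0 := Function.ne_iff.mp hx₀
  obtain ⟨k₀, hk₀⟩ : ∃ k, y₀ k ≠ 0 := Function.ne_iff.mp hy₀
  have hyk₀ : y k₀ ≠ 0 := right_ne_zero_of_mul (h j₀ k₀ ▸ mul_ne_zero hj₀ hk₀)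
  have hx : x = (y₀ k₀ / y k₀) • x₀ := funext fun j => by
    simp only [Pi.smul_apply, smul_eq_mul]
    field_simp
    linear_combination h j k₀
  refine ⟨y₀ k₀ / y k₀, div_ne_zero hk₀ hyk₀, hx, funext fun k => ?_⟩
  have hk := h j₀ k
  rw [hx] at hk
  simp only [Pi.smul_apply, smul_eq_mul, inv_div] at hk ⊢
  field_simp at hk ⊢
  linear_combination hk

/-- Theorem 3.4 (subspace constraints): if `n ≥ m₁m₂`, then for almost all `D, E`, every
`(x₀,y₀)` with `x₀ ≠ 0`, `y₀ ≠ 0` is identifiable up to scaling from `(Dx₀) ⊛ (Ey₀)`. -/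
theorem blind_deconv_subspace_identifiability {n m₁ m₂ : ℕ} (h : m₁ * m₂ ≤ n) :
    ∀ᵐ DE : (Fin n → Fin m₁ → ℂ) × (Fin n → Fin m₂ → ℂ) ∂volume,
      ∀ x₀ : Fin m₁ → ℂ, ∀ y₀ : Fin m₂ → ℂ, x₀ ≠ 0 → y₀ ≠ 0 →
        ∀ x : Fin m₁ → ℂ, ∀ y : Fin m₂ → ℂ,
          cconv (mulVecF DE.1 x) (mulVecF DE.2 y) =
            cconv (mulVecF DE.1 x₀) (mulVecF DE.2 y₀) →
          ∃ σ : ℂ, σ ≠ 0 ∧ x = σ • x₀ ∧ y = σ⁻¹ • y₀ := by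
  filter_upwards [ae_injective_mulVec_convMatrix h] with DE hinj x₀ y₀ hx₀ hy₀ x y hxy
  rw [cconv_mulVecF, cconv_mulVecF] at hxy
  exact exists_smul_eq_of_mul_eq_mul hx₀ hy₀ fun j k => congrFun (hinj hxy) (j, k)
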